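/- arXiv:2205.08880 — 2 statements merged into one kernel-verified Lean document; each statement's English description precedes it below -/
import Mathlib

section
/- Let G be a group acting on a unital k-algebra A, let U ⊆ G be a subgroup, and let σ: U\G → G be a set-theoretic section of the projection G → U\G. Then the k-linear map ι_σ: (A⋊U)⟨U\G⟩ → A⟨G⟩⋊U sending (u_g a)⟨x⟩ to u_g (a⟨σ(x)⟩) is a homomorphism of k-algebras. -/
/-!
Both sides of the multiplicativity identity are biadditive in the two factors, so it suffices to
compare them on basis elements `(u_g a)⟨x⟩` and `(u_h b)⟨y⟩`. Since `⟨x⟩⟨y⟩ = ⟨y⟩`, the left label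
is forgotten on both sides: the diagonal action of `h⁻¹` sends `a⟨σ(x)⟩` to `h⁻¹(a)⟨h⁻¹σ(x)⟩`, and
multiplying by `b⟨σ(y)⟩` discards `h⁻¹σ(x)`. Both sides are therefore `u_{gh} (h⁻¹(a) b)⟨σ(y)⟩`.
-/

/-- The crossed product `A⋊U`, modelled as `U →₀ A`, with multiplication
`(u_g a)(u_h b) = u_{gh} h⁻¹(a) b`. -/
noncomputable def crossMulAU {k A G : Type*} [Field k] [Ring A] [Algebra k A]
    [Group G] (ρ : G →* (A ≃ₐ[k] A)) (U : Subgroup G) :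
    (U →₀ A) → (U →₀ A) → (U →₀ A) :=
  fun f f' => f.sum fun g a => f'.sum fun h b =>
    Finsupp.single (g * h) (ρ ((h : G)⁻¹) a * b)

/-- The multiplication of `(A⋊U)⟨U\G⟩ = (A⋊U) ⊗ k⟨U\G⟩`, modelled as
`U\G →₀ (U →₀ A)`: `(b⟨x⟩)(b'⟨y⟩) = (b·b')⟨y⟩` with `b·b'` the crossed product
multiplication. -/
noncomputable def crossCosetMul {k A G : Type*} [Field k] [Ring A] [Algebra k A]
    [Group G] (ρ : G →* (A ≃ₐ[k] A)) (U : Subgroup G) :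
    (Quotient (QuotientGroup.rightRel U) →₀ (U →₀ A)) →
    (Quotient (QuotientGroup.rightRel U) →₀ (U →₀ A)) →
    (Quotient (QuotientGroup.rightRel U) →₀ (U →₀ A)) :=
  fun F F' => F.sum fun _ b => F'.sum fun y b' =>
    Finsupp.single y (crossMulAU ρ U b b')

/-- The multiplication of `A⟨G⟩ = A ⊗ k⟨G⟩`, modelled as `G →₀ A`. -/
noncomputable def mulAG {A G : Type*} [Ring A] :
    (G →₀ A) → (G →₀ A) → (G →₀ A) :=
  fun f f' => f.sum fun _ a => f'.sum fun γ b => Finsupp.single γ (a * b)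

/-- The diagonal action of `h ∈ G` on `A⟨G⟩`: `h(a⟨γ⟩) = h(a)⟨hγ⟩`. -/
noncomputable def actAG {k A G : Type*} [Field k] [Ring A] [Algebra k A]
    [Group G] (ρ : G →* (A ≃ₐ[k] A)) (h : G) : (G →₀ A) → (G →₀ A) :=
  fun f => Finsupp.mapDomain (fun γ => h * γ)
    (Finsupp.mapRange (fun a => ρ h a) (map_zero _) f)

/-- The crossed product `A⟨G⟩⋊U`, modelled as `U →₀ (G →₀ A)`, with multiplication
`(u_g b)(u_h b') = u_{gh} h⁻¹(b) b'`, where `U` acts diagonally on `A⟨G⟩`. -/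
noncomputable def crossMulB {k A G : Type*} [Field k] [Ring A] [Algebra k A]
    [Group G] (ρ : G →* (A ≃ₐ[k] A)) (U : Subgroup G) :
    (U →₀ (G →₀ A)) → (U →₀ (G →₀ A)) → (U →₀ (G →₀ A)) :=
  fun F F' => F.sum fun g b => F'.sum fun h b' =>
    Finsupp.single (g * h) (mulAG (actAG ρ ((h : G)⁻¹) b) b')

/-- The linear map `ι_σ : (A⋊U)⟨U\G⟩ → A⟨G⟩⋊U`, `(u_g a)⟨x⟩ ↦ u_g (a⟨σ(x)⟩)`. -/
noncomputable def iotaSigma {A G : Type*} [Ring A] [Group G] (U : Subgroup G)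
    (σ : Quotient (QuotientGroup.rightRel U) → G) :
    (Quotient (QuotientGroup.rightRel U) →₀ (U →₀ A)) → (U →₀ (G →₀ A)) :=
  fun F => F.sum fun x b => b.sum fun u a =>
    Finsupp.single u (Finsupp.single (σ x) a)

namespace Finsupp

variable {α β γ M N P : Type*} [AddCommMonoid M] [AddCommMonoid N] [AddCommMonoid P]

noncomputable def convAddHom (φ : α → β → γ) (B : α → β → M →+ N →+ P) :
    (α →₀ M) →+ (β →₀ N) →+ (γ →₀ P) :=
  liftAddHom fun a => liftAddHom.toAddMonoidHom.comp
    (AddMonoidHom.pi fun b => (AddMonoidHom.compHom (singleAddHom (φ a b))).comp (B a b))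

theorem convAddHom_apply (φ : α → β → γ) (B : α → β → M →+ N →+ P) (f : α →₀ M)
    (f' : β →₀ N) :
    convAddHom φ B f f' = f.sum fun a m => f'.sum fun b n => single (φ a b) (B a b m n) := by
  simp only [convAddHom, AddEquiv.toAddMonoidHom_eq_coe, liftAddHom_apply, AddMonoidHom.coe_comp,
    AddMonoidHom.coe_coe, AddMonoidHom.finsuppSum_apply, Function.comp_apply, AddMonoidHom.pi_apply,
    AddMonoidHom.compHom_apply_apply]
  rfl

@[simp]
theorem convAddHom_single_single (φ : α → β → γ) (B : α → β → M →+ N →+ P) (a : α) (b : β)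
    (m : M) (n : N) :
    convAddHom φ B (single a m) (single b n) = single (φ a b) (B a b m n) := by
  simp [convAddHom]

end Finsupp

section MulAG

variable {ι A : Type*} [Ring A]

noncomputable def mulAGHom : (ι →₀ A) →+ (ι →₀ A) →+ (ι →₀ A) :=
  Finsupp.convAddHom (fun _ γ => γ) fun _ _ => AddMonoidHom.mul

@[simp]
theorem mulAGHom_single_single (i j : ι) (a b : A) :
    mulAGHom (Finsupp.single i a) (Finsupp.single j b) = Finsupp.single j (a * b) :=
  Finsupp.convAddHom_single_single _ _ _ _ _ _

theorem mulAG_eq (f f' : ι →₀ A) : mulAG f f' = mulAGHom f f' := by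
  rw [mulAGHom, Finsupp.convAddHom_apply]
  rfl

end MulAG

section CrossedProducts

variable {k A G : Type*} [Field k] [Ring A] [Algebra k A] [Group G]
  (ρ : G →* (A ≃ₐ[k] A)) (U : Subgroup G)

local notation "UG" => Quotient (QuotientGroup.rightRel U)

noncomputable def crossMulAUHom : (U →₀ A) →+ (U →₀ A) →+ (U →₀ A) :=
  Finsupp.convAddHom (· * ·) fun _ h => AddMonoidHom.mul.comp (ρ ((h : G)⁻¹)).toAddMonoidHom

@[simp]
theorem crossMulAUHom_single_single (g h : U) (a b : A) :
    crossMulAUHom ρ U (Finsupp.single g a) (Finsupp.single h b)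
      = Finsupp.single (g * h) (ρ ((h : G)⁻¹) a * b) :=
  Finsupp.convAddHom_single_single _ _ _ _ _ _

theorem crossMulAU_eq (f f' : U →₀ A) : crossMulAU ρ U f f' = crossMulAUHom ρ U f f' := by
  rw [crossMulAUHom, Finsupp.convAddHom_apply]
  rfl

noncomputable def crossCosetMulHom : (UG →₀ (U →₀ A)) →+ (UG →₀ (U →₀ A)) →+ (UG →₀ (U →₀ A)) :=
  Finsupp.convAddHom (fun _ y => y) fun _ _ => crossMulAUHom ρ U

@[simp]
theorem crossCosetMulHom_single_single (x y : UG) (f f' : U →₀ A) :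
    crossCosetMulHom ρ U (Finsupp.single x f) (Finsupp.single y f')
      = Finsupp.single y (crossMulAUHom ρ U f f') :=
  Finsupp.convAddHom_single_single _ _ _ _ _ _

theorem crossCosetMul_eq (F F' : UG →₀ (U →₀ A)) :
    crossCosetMul ρ U F F' = crossCosetMulHom ρ U F F' := by
  rw [crossCosetMulHom, Finsupp.convAddHom_apply]
  simp only [crossCosetMul, crossMulAU_eq]

noncomputable def actAGHom (h : G) : (G →₀ A) →+ (G →₀ A) :=
  (Finsupp.mapDomain.addMonoidHom (h * ·)).comp
    (Finsupp.mapRange.addMonoidHom (ρ h).toAddMonoidHom)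

@[simp]
theorem actAGHom_single (h γ : G) (a : A) :
    actAGHom ρ h (Finsupp.single γ a) = Finsupp.single (h * γ) (ρ h a) := by
  simp [actAGHom]

theorem actAG_eq (h : G) (f : G →₀ A) : actAG ρ h f = actAGHom ρ h f :=
  rfl

noncomputable def crossMulBHom : (U →₀ (G →₀ A)) →+ (U →₀ (G →₀ A)) →+ (U →₀ (G →₀ A)) :=
  Finsupp.convAddHom (· * ·) fun _ h => mulAGHom.comp (actAGHom ρ ((h : G)⁻¹))

@[simp]
theorem crossMulBHom_single_single (g h : U) (f f' : G →₀ A) :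
    crossMulBHom ρ U (Finsupp.single g f) (Finsupp.single h f')
      = Finsupp.single (g * h) (mulAGHom (actAGHom ρ ((h : G)⁻¹) f) f') :=
  Finsupp.convAddHom_single_single _ _ _ _ _ _

theorem crossMulB_eq (F F' : U →₀ (G →₀ A)) : crossMulB ρ U F F' = crossMulBHom ρ U F F' := by
  rw [crossMulBHom, Finsupp.convAddHom_apply]
  simp only [crossMulB, mulAG_eq, actAG_eq]
  rfl

end CrossedProducts

section Iota

variable (k : Type*) {A G : Type*} [Field k] [Ring A] [Algebra k A] [Group G] (U : Subgroup G)
  (σ : Quotient (QuotientGroup.rightRel U) → G)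

noncomputable def iotaSigmaₗ :
    (Quotient (QuotientGroup.rightRel U) →₀ (U →₀ A)) →ₗ[k] (U →₀ (G →₀ A)) :=
  Finsupp.lsum k fun x => Finsupp.lsum k fun u => Finsupp.lsingle u ∘ₗ Finsupp.lsingle (σ x)

@[simp]
theorem iotaSigmaₗ_single_single (x : Quotient (QuotientGroup.rightRel U)) (u : U) (a : A) :
    iotaSigmaₗ k U σ (Finsupp.single x (Finsupp.single u a))
      = Finsupp.single u (Finsupp.single (σ x) a) := by
  simp only [iotaSigmaₗ, Finsupp.lsum_single, LinearMap.comp_apply, Finsupp.lsingle_apply]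

theorem iotaSigma_eq (F : Quotient (QuotientGroup.rightRel U) →₀ (U →₀ A)) :
    iotaSigma U σ F = iotaSigmaₗ k U σ F := by
  simp only [iotaSigmaₗ, Finsupp.lsum_apply]
  rfl

end Iota

theorem stmt8_general (k A G : Type*) [Field k] [Ring A] [Algebra k A] [Group G]
    (ρ : G →* (A ≃ₐ[k] A)) (U : Subgroup G)
    (σ : Quotient (QuotientGroup.rightRel U) → G) :
    (∀ F F' : Quotient (QuotientGroup.rightRel U) →₀ (U →₀ A),
      iotaSigma U σ (F + F') = iotaSigma U σ F + iotaSigma U σ F') ∧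
    (∀ (r : k) (F : Quotient (QuotientGroup.rightRel U) →₀ (U →₀ A)),
      iotaSigma U σ (r • F) = r • iotaSigma U σ F) ∧
    (∀ F F' : Quotient (QuotientGroup.rightRel U) →₀ (U →₀ A),
      iotaSigma U σ (crossCosetMul ρ U F F')
        = crossMulB ρ U (iotaSigma U σ F) (iotaSigma U σ F')) := by
  simp only [iotaSigma_eq k (A := A), crossCosetMul_eq, crossMulB_eq]
  refine ⟨fun F F' => map_add _ F F', fun r F => map_smul _ r F, fun F F' => ?_⟩
  let ι := (iotaSigmaₗ k U σ (A := A)).toAddMonoidHom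
  have hmul : (crossCosetMulHom ρ U).compr₂ ι = ((crossMulBHom ρ U).compl₂ ι).comp ι := by
    ext x g a y h b : 6
    -- `Finsupp.single_mul` would split `single _ (a * b)` into a pointwise product of finsupps
    simp [ι, -Finsupp.single_mul]
  exact congr($hmul F F')

/-- given a set-theoretic section `σ : U\G → G` of the projection
`G → U\G`, the map `ι_σ : (A⋊U)⟨U\G⟩ → A⟨G⟩⋊U` is a homomorphism of
`k`-algebras. -/
theorem stmt8 (k A G : Type*) [Field k] [Ring A] [Algebra k A] [Group G]
    (ρ : G →* (A ≃ₐ[k] A)) (U : Subgroup G)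
    (σ : Quotient (QuotientGroup.rightRel U) → G)
    (hσ : ∀ x : Quotient (QuotientGroup.rightRel U), Quotient.mk'' (σ x) = x) :
    (∀ F F' : Quotient (QuotientGroup.rightRel U) →₀ (U →₀ A),
      iotaSigma U σ (F + F') = iotaSigma U σ F + iotaSigma U σ F') ∧
    (∀ (r : k) (F : Quotient (QuotientGroup.rightRel U) →₀ (U →₀ A)),
      iotaSigma U σ (r • F) = r • iotaSigma U σ F) ∧
    (∀ F F' : Quotient (QuotientGroup.rightRel U) →₀ (U →₀ A),
      iotaSigma U σ (crossCosetMul ρ U F F')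
        = crossMulB ρ U (iotaSigma U σ F) (iotaSigma U σ F')) :=
  stmt8_general k A G ρ U σ
end

section
/- Let G be a group acting on a unital k-algebra A and U ⊆ G a subgroup with a section σ: U\G → G of G → U\G. Then the k-linear map kU ⊗_k A⟨U\G⟩ ⊗_k kU → A⟨G⟩⋊U sending u_g ⊗ (a⟨x⟩) ⊗ u_h to u_{gh} h⁻¹(a)⟨h⁻¹σ(x)⟩ is a bijection; in particular A⟨G⟩⋊U is a free kU-bimodule. -/
/-!
Every `y ∈ G` is uniquely of the form `h⁻¹ σ(x)` with `h ∈ U` and `x = Uy`, so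
`(g, x, h) ↦ (gh, h⁻¹σ(x))` is a bijection `U × U\G × U ≃ U × G` of the index sets. On a basis
element `θ` moves the index along this bijection and twists the coefficient by the automorphism
`ρ(h⁻¹)`; up to currying `U × G →₀ A ≃ U →₀ G →₀ A`, it is therefore a composite of
`k`-linear equivalences.
-/

/-- The map `kU ⊗_k A⟨U\G⟩ ⊗_k kU → A⟨G⟩⋊U`. Here `kU ⊗ A⟨U\G⟩ ⊗ kU` is modelled
as the free `A`-module `(U × U\G × U) →₀ A` on basis elements `u_g ⊗ a⟨x⟩ ⊗ u_h`,
and `A⟨G⟩⋊U` as `U →₀ (G →₀ A)`. The map sends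
`u_g ⊗ (a⟨x⟩) ⊗ u_h ↦ u_{gh} h⁻¹(a)⟨h⁻¹σ(x)⟩`. -/
noncomputable def thetaMap {k A G : Type*} [Field k] [Ring A] [Algebra k A]
    [Group G] (ρ : G →* (A ≃ₐ[k] A)) (U : Subgroup G)
    (σ : Quotient (QuotientGroup.rightRel U) → G) :
    ((U × Quotient (QuotientGroup.rightRel U) × U) →₀ A) → (U →₀ (G →₀ A)) :=
  fun F => F.sum fun t a =>
    Finsupp.single (t.1 * t.2.2)
      (Finsupp.single (((t.2.2 : G))⁻¹ * σ t.2.1) (ρ ((t.2.2 : G))⁻¹ a))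

namespace Finsupp

variable {R M N α β : Type*} [Semiring R] [AddCommMonoid M] [Module R M]
  [AddCommMonoid N] [Module R N]

noncomputable def domLCongrTwist (e : α ≃ β) (φ : α → M ≃ₗ[R] N) :
    (α →₀ M) ≃ₗ[R] (β →₀ N) :=
  LinearEquiv.ofLinearMap
    (lsum ℕ fun t => (lsingle (e t)).comp (φ t).toLinearMap)
    (lsum ℕ fun s => (lsingle (e.symm s)).comp (φ (e.symm s)).symm.toLinearMap)
    (by ext s b; simp) (by ext t a; simp)

theorem domLCongrTwist_apply (e : α ≃ β) (φ : α → M ≃ₗ[R] N) (F : α →₀ M) :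
    domLCongrTwist e φ F = F.sum fun t a => single (e t) (φ t a) :=
  rfl

end Finsupp

namespace Subgroup

variable {G : Type*} [Group G] (U : Subgroup G)
  {σ : Quotient (QuotientGroup.rightRel U) → G} (hσ : ∀ x, Quotient.mk'' (σ x) = x)

include hσ in
theorem section_mul_inv_mem (y : G) : σ (Quotient.mk'' y) * y⁻¹ ∈ U := by
  have h := hσ (Quotient.mk'' y)
  rw [Quotient.eq'', QuotientGroup.rightRel_apply] at h
  simpa using U.inv_mem h

def sectionIndexEquiv : U × Quotient (QuotientGroup.rightRel U) × U ≃ U × G where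
  toFun t := (t.1 * t.2.2, (t.2.2 : G)⁻¹ * σ t.2.1)
  invFun p :=
    let u : U := ⟨σ (Quotient.mk'' p.2) * p.2⁻¹, U.section_mul_inv_mem hσ p.2⟩
    (p.1 * u⁻¹, Quotient.mk'' p.2, u)
  left_inv := by
    rintro ⟨g, x, h⟩
    have hx : Quotient.mk'' ((h : G)⁻¹ * σ x) = x := by
      refine Eq.trans ?_ (hσ x)
      rw [Quotient.eq'', QuotientGroup.rightRel_apply]
      simp [mul_inv_rev, ← mul_assoc]
    have hu : σ x * ((h : G)⁻¹ * σ x)⁻¹ = h := by group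
    simp only [hx, hu, mul_inv_cancel_right]
  right_inv := by
    rintro ⟨w, y⟩
    ext <;> simp [mul_assoc]

end Subgroup

section

variable {k A G : Type*} [Field k] [Ring A] [Algebra k A] [Group G]
  (ρ : G →* (A ≃ₐ[k] A)) (U : Subgroup G)
  {σ : Quotient (QuotientGroup.rightRel U) → G} (hσ : ∀ x, Quotient.mk'' (σ x) = x)

noncomputable def thetaLinearEquiv :
    ((U × Quotient (QuotientGroup.rightRel U) × U) →₀ A) ≃ₗ[k] (U →₀ (G →₀ A)) :=
  (Finsupp.domLCongrTwist (U.sectionIndexEquiv hσ)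
    fun t => (ρ (t.2.2 : G)⁻¹).toLinearEquiv).trans (Finsupp.curryLinearEquiv k)

theorem coe_thetaLinearEquiv : ⇑(thetaLinearEquiv ρ U hσ) = thetaMap ρ U σ := by
  funext F
  simp [thetaLinearEquiv, thetaMap, Finsupp.domLCongrTwist_apply, map_finsuppSum,
    Subgroup.sectionIndexEquiv]

end

/-- given a section `σ : U\G → G` of the coset projection, the
`k`-linear map `kU ⊗_k A⟨U\G⟩ ⊗_k kU → A⟨G⟩⋊U`,
`u_g ⊗ (a⟨x⟩) ⊗ u_h ↦ u_{gh} h⁻¹(a)⟨h⁻¹σ(x)⟩`, is a bijection; in particular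
`A⟨G⟩⋊U` is a free `kU`-bimodule. -/
theorem stmt9 (k A G : Type*) [Field k] [Ring A] [Algebra k A] [Group G]
    (ρ : G →* (A ≃ₐ[k] A)) (U : Subgroup G)
    (σ : Quotient (QuotientGroup.rightRel U) → G)
    (hσ : ∀ x : Quotient (QuotientGroup.rightRel U), Quotient.mk'' (σ x) = x) :
    (∀ F F' : (U × Quotient (QuotientGroup.rightRel U) × U) →₀ A,
      thetaMap ρ U σ (F + F') = thetaMap ρ U σ F + thetaMap ρ U σ F') ∧
    (∀ (r : k) (F : (U × Quotient (QuotientGroup.rightRel U) × U) →₀ A),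
      thetaMap ρ U σ (r • F) = r • thetaMap ρ U σ F) ∧
    Function.Bijective (thetaMap ρ U σ) := by
  rw [← coe_thetaLinearEquiv ρ U hσ]
  exact ⟨map_add _, map_smul _, LinearEquiv.bijective _⟩
end
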